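/- arXiv:2601.23070 — 3 statements merged into one kernel-verified Lean document; each statement's English description precedes it below -/
import Mathlib

section
/- If α is a plump ordinal, then its plump successor α⁺ᵖˡ = {β ⊆ α : β is a plump ordinal} is itself a plump ordinal. -/
/-- An ordinal: a transitive set of transitive sets. -/
def ZFSet.IsOrd (x : ZFSet) : Prop :=
  x.IsTransitive ∧ ∀ y ∈ x, ZFSet.IsTransitive y

/-- `γ` is plump relative to `α`: for all `δ ∈ γ` and `ε ∈ α` with `ε ⊆ δ`, `ε ∈ γ`. -/
def ZFSet.relpl (α γ : ZFSet) : Prop :=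
  ∀ δ ∈ γ, ∀ ε ∈ α, ε ⊆ δ → ε ∈ γ

/-- `α` is a plump ordinal. -/
def ZFSet.PlOrd (α : ZFSet) : Prop :=
  α.IsOrd ∧ ∀ β ∈ α, ∀ γ : ZFSet, γ ⊆ β → α.relpl γ →
    γ ∈ α ∧ ∀ δ ∈ α, β ∈ δ → γ ∈ δ

/-- The plump successor of `α`: the set of all plump ordinals that are subsets of `α`. -/
noncomputable def ZFSet.plumpSucc (α : ZFSet) : ZFSet :=
  (ZFSet.powerset α).sep ZFSet.PlOrd

/-- Every element of a plump ordinal is relatively plump, by rank induction. -/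
theorem ZFSet.relpl_of_mem_aux : ∀ (o : Ordinal) (ε α : ZFSet), ε.rank = o →
    α.PlOrd → ε ∈ α → α.relpl ε := by
  intro o
  induction o using Ordinal.induction with
  | h o IH =>
    intro ε α hr hα hε x hx e he hsub
    have hxα : x ∈ α := hα.1.1 ε hε hx
    have hrank : e.rank < o := hr ▸ lt_of_le_of_lt (rank_mono hsub) (rank_lt_of_mem hx)
    have hrel : α.relpl e := IH e.rank hrank e α rfl hα he
    exact (hα.2 x hxα e hsub hrel).2 ε hε hx

theorem ZFSet.relpl_of_mem {ε α : ZFSet} (hα : α.PlOrd) (hε : ε ∈ α) : α.relpl ε :=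
  relpl_of_mem_aux ε.rank ε α rfl hα hε

/-- Every element of a plump ordinal is a plump ordinal. -/
theorem ZFSet.plOrd_of_mem {ε α : ZFSet} (hα : α.PlOrd) (hε : ε ∈ α) : ε.PlOrd := by
  have hεsub : ε ⊆ α := hα.1.1 ε hε
  have hεtr : ε.IsTransitive := hα.1.2 ε hε
  refine ⟨⟨hεtr, fun y hy => hα.1.2 y (hεsub hy)⟩, ?_⟩
  intro β hβ γ hγβ hrel
  have hβα : β ∈ α := hεsub hβ
  -- γ is relatively plump w.r.t. α
  have hrelα : α.relpl γ := by
    intro d hd e heα hesub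
    have hdε : d ∈ ε := hεtr β hβ (hγβ hd)
    have heε : e ∈ ε := relpl_of_mem hα hε d hdε e heα hesub
    exact hrel d hd e heε hesub
  have h := hα.2 β hβα γ hγβ hrelα
  exact ⟨h.2 ε hε hβ, fun δ hδ => h.2 δ (hεsub hδ)⟩

theorem plumpSucc_plOrd (α : ZFSet) (hα : α.PlOrd) : α.plumpSucc.PlOrd := by
  have hmem : ∀ x : ZFSet, x ∈ α.plumpSucc ↔ x ⊆ α ∧ x.PlOrd := by
    intro x
    simp [ZFSet.plumpSucc, ZFSet.mem_sep, ZFSet.mem_powerset, and_comm]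
  -- elements of α (and their elements) belong to plumpSucc applied facts
  have hsub_of_mem : ∀ {x β : ZFSet}, β.PlOrd → β ⊆ α → x ∈ β → x ∈ α.plumpSucc := by
    intro x β hβ hβα hx
    exact (hmem x).2 ⟨hα.1.1 x (hβα hx), ZFSet.plOrd_of_mem hβ hx⟩
  constructor
  · constructor
    · -- plumpSucc is transitive
      intro β hβ x hx
      obtain ⟨hβα, hβpl⟩ := (hmem β).1 hβ
      exact hsub_of_mem hβpl hβα hx
    · intro y hy
      exact ((hmem y).1 hy).2.1.1
  · intro β hβ γ hγβ hrel
    obtain ⟨hβα, hβpl⟩ := (hmem β).1 hβ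
    have hγα : γ ⊆ α := fun x hx => hβα (hγβ hx)
    -- γ is transitive
    have hγtr : γ.IsTransitive := by
      intro x hx y hy
      have hxβ : x ∈ β := hγβ hx
      have hyS : y ∈ α.plumpSucc := hsub_of_mem (ZFSet.plOrd_of_mem hβpl hxβ)
        (hα.1.1 x (hβα hxβ)) hy
      exact hrel x hx y hyS ((hβpl.1.2 x hxβ) y hy)
    -- γ is a plump ordinal
    have hγpl : γ.PlOrd := by
      refine ⟨⟨hγtr, fun y hy => (ZFSet.plOrd_of_mem hβpl (hγβ hy)).1.1⟩, ?_⟩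
      intro b hb g hgb hrelγ
      have hbβ : b ∈ β := hγβ hb
      -- g is relatively plump w.r.t. β
      have hrelβ : β.relpl g := by
        intro d hd e heβ hesub
        have hdγ : d ∈ γ := hγtr b hb (hgb hd)
        have heS : e ∈ α.plumpSucc := hsub_of_mem hβpl hβα heβ
        have heγ : e ∈ γ := hrel d hdγ e heS hesub
        exact hrelγ d hd e heγ hesub
      have h := hβpl.2 b hbβ g hgb hrelβ
      have hgS : g ∈ α.plumpSucc := hsub_of_mem hβpl hβα h.1
      refine ⟨hrel b hb g hgS hgb, fun d hd hbd => h.2 d (hγβ hd) hbd⟩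
    refine ⟨(hmem γ).2 ⟨hγα, hγpl⟩, ?_⟩
    -- second condition: γ ∈ δ whenever β ∈ δ ∈ plumpSucc α
    intro δ hδ hβδ
    obtain ⟨hδα, hδpl⟩ := (hmem δ).1 hδ
    have hrelδ : δ.relpl γ := by
      intro d hd e heδ hesub
      exact hrel d hd e (hsub_of_mem hδpl hδα heδ) hesub
    exact (hδpl.2 β hβδ γ hγβ hrelδ).1
end

section
/- For plump ordinals α, β, β′, γ with γ ∈ α, if α·β ⊆ α·β′ + γ then β ⊆ β′. -/
/-- `add` is plump ordinal addition: `α + β = α ∪ ⋃_{γ ∈ β} (α + γ)⁺ᵖˡ`. -/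
def IsPlAdd (add : ZFSet → ZFSet → ZFSet) : Prop :=
  ∀ α β x : ZFSet, x ∈ add α β ↔ x ∈ α ∨ ∃ γ ∈ β, x ∈ (add α γ).plumpSucc

/-- `mul` is plump ordinal multiplication: `α · β = ⋃_{δ ∈ β} (α · δ + α)`. -/
def IsPlMul (add mul : ZFSet → ZFSet → ZFSet) : Prop :=
  ∀ α β x : ZFSet, x ∈ mul α β ↔ ∃ δ ∈ β, x ∈ add (mul α δ) α

section Aux

open ZFSet

theorem mem_plumpSucc {a x : ZFSet} : x ∈ a.plumpSucc ↔ x ⊆ a ∧ x.PlOrd := by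
  simp [ZFSet.plumpSucc, ZFSet.mem_sep, ZFSet.mem_powerset]

/-- Elements of a plump ordinal are plump relative to it (auxiliary, by ∈-induction). -/
theorem lemC : ∀ d a b e : ZFSet, a.PlOrd → b ∈ a → d ∈ b → e ∈ a → e ⊆ d → e ∈ b := by
  intro d
  induction d using ZFSet.inductionOn with
  | _ d IH =>
    intro a b e ha hb hd he hsub
    have hda : d ∈ a := ha.1.1.mem_trans hd hb
    have hrel : a.relpl e := by
      intro d' hd' e' he' hsub'
      exact IH d' (hsub hd') a e e' ha he hd' he' hsub'
    obtain ⟨-, H⟩ := ha.2 d hda e hsub hrel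
    exact H b hb hd

/-- Elements of plump ordinals are plump ordinals. -/
theorem lemB : ∀ {a x : ZFSet}, a.PlOrd → x ∈ a → x.PlOrd := by
  intro a x ha hx
  constructor
  · exact ⟨ha.1.2 x hx, fun y hy => ha.1.2 y (ha.1.1.mem_trans hy hx)⟩
  · intro b hb g hg hrel
    have hba : b ∈ a := ha.1.1.mem_trans hb hx
    have hrel' : a.relpl g := by
      intro d hd e he hsub
      have hdb : d ∈ b := hg hd
      have heb : e ∈ b := lemC d a b e ha hba hdb he hsub
      have hex : e ∈ x := (ha.1.2 x hx).mem_trans heb hb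
      exact hrel d hd e hex hsub
    obtain ⟨hga, H⟩ := ha.2 b hba g hg hrel'
    exact ⟨H x hx hb, fun d hd hbd => H d (ha.1.1.mem_trans hd hx) hbd⟩

/-- A plump ordinal that is a subset of an element of a plump ordinal is an element. -/
theorem lemD : ∀ d g e : ZFSet, g.PlOrd → e.PlOrd → d ∈ g → e ⊆ d → e ∈ g := by
  intro d
  induction d using ZFSet.inductionOn with
  | _ d IH =>
    intro g e hg he hd hsub
    have hrel : g.relpl e := by
      intro d' hd' f hf hsubf
      exact IH d' (hsub hd') e f he (lemB hg hf) hd' hsubf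
    exact (hg.2 d hd e hsub hrel).1

/-- A set covered by plump-ordinal subsets of itself is a plump ordinal. -/
theorem lemU {x : ZFSet} (hcov : ∀ b ∈ x, ∃ s : ZFSet, s.PlOrd ∧ b ∈ s ∧ s ⊆ x) :
    x.PlOrd := by
  constructor
  · constructor
    · intro b hb
      obtain ⟨s, hs, hbs, hsx⟩ := hcov b hb
      exact fun c hc => hsx (hs.1.1.mem_trans hc hbs)
    · intro b hb
      obtain ⟨s, hs, hbs, hsx⟩ := hcov b hb
      exact (lemB hs hbs).1.1
  · intro b hb g hg hrel
    obtain ⟨s, hs, hbs, hsx⟩ := hcov b hb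
    have key : ∀ s' : ZFSet, s'.PlOrd → s' ⊆ x → b ∈ s' →
        g ∈ s' ∧ ∀ d ∈ s', b ∈ d → g ∈ d := by
      intro s' hs' hs'x hbs'
      have hrel' : s'.relpl g := fun d hd e he hsub => hrel d hd e (hs'x he) hsub
      exact hs'.2 b hbs' g hg hrel'
    refine ⟨hsx (key s hs hsx hbs).1, ?_⟩
    intro d hd hbd
    obtain ⟨s', hs', hds', hs'x⟩ := hcov d hd
    have hbs' : b ∈ s' := hs'.1.1.mem_trans hbd hds'
    exact (key s' hs' hs'x hbs').2 d hds' hbd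

/-- The plump successor of a plump ordinal is a plump ordinal. -/
theorem plOrd_plumpSucc {a : ZFSet} (ha : a.PlOrd) : a.plumpSucc.PlOrd := by
  have htrans : a.plumpSucc.IsTransitive := by
    intro b hb c hc
    obtain ⟨hba, hbp⟩ := mem_plumpSucc.1 hb
    exact mem_plumpSucc.2 ⟨ha.1.1.subset_of_mem (hba hc), lemB hbp hc⟩
  refine ⟨⟨htrans, fun b hb => (mem_plumpSucc.1 hb).2.1.1⟩, ?_⟩
  intro b hb g hg hrel
  obtain ⟨hba, hbp⟩ := mem_plumpSucc.1 hb
  -- g is transitive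
  have hgtrans : g.IsTransitive := by
    intro d hd h hh
    have hdb : d ∈ b := hg hd
    have hhb : h ∈ b := hbp.1.1.mem_trans hh hdb
    have hhps : h ∈ a.plumpSucc :=
      mem_plumpSucc.2 ⟨ha.1.1.subset_of_mem (hba hhb), lemB hbp hhb⟩
    have hhd : h ⊆ d := (lemB hbp hdb).1.1.subset_of_mem hh
    exact hrel d hd h hhps hhd
  -- g is a plump ordinal
  have hgp : g.PlOrd := by
    refine ⟨⟨hgtrans, fun e he => (lemB hbp (hg he)).1.1⟩, ?_⟩
    intro b' hb' h hh hrelg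
    have hb'b : b' ∈ b := hg hb'
    have hrelb : b.relpl h := by
      intro d hd e he hsub
      have heb' : e ∈ b' := lemC d b b' e hbp hb'b (hh hd) he hsub
      exact hrelg d hd e (hgtrans.mem_trans heb' hb') hsub
    obtain ⟨hhb, H⟩ := hbp.2 b' hb'b h hh hrelb
    have hhps : h ∈ a.plumpSucc :=
      mem_plumpSucc.2 ⟨ha.1.1.subset_of_mem (hba hhb), lemB hbp hhb⟩
    refine ⟨hrel b' hb' h hhps hh, ?_⟩
    intro d hd hbd
    exact H d (hg hd) hbd
  refine ⟨mem_plumpSucc.2 ⟨fun z hz => hba (hg hz), hgp⟩, ?_⟩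
  intro d hd hbd
  exact lemD b d g (mem_plumpSucc.1 hd).2 hgp hbd hg

theorem subset_addL {add : ZFSet → ZFSet → ZFSet} (hadd : IsPlAdd add) (α β : ZFSet) :
    α ⊆ add α β := fun x hx => (hadd α β x).2 (Or.inl hx)

theorem plOrd_add {add : ZFSet → ZFSet → ZFSet} (hadd : IsPlAdd add) :
    ∀ β α : ZFSet, α.PlOrd → β.PlOrd → (add α β).PlOrd := by
  intro β
  induction β using ZFSet.inductionOn with
  | _ β IH =>
    intro α hα hβ
    apply lemU
    intro b hb
    rcases (hadd α β b).1 hb with hbα | ⟨c, hc, hbc⟩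
    · exact ⟨α, hα, hbα, subset_addL hadd α β⟩
    · refine ⟨(add α c).plumpSucc, plOrd_plumpSucc (IH c hc α hα (lemB hβ hc)), hbc, ?_⟩
      intro y hy
      exact (hadd α β y).2 (Or.inr ⟨c, hc, hy⟩)

theorem plOrd_mul {add mul : ZFSet → ZFSet → ZFSet} (hadd : IsPlAdd add)
    (hmul : IsPlMul add mul) : ∀ β α : ZFSet, α.PlOrd → β.PlOrd → (mul α β).PlOrd := by
  intro β
  induction β using ZFSet.inductionOn with
  | _ β IH =>
    intro α hα hβ
    apply lemU
    intro b hb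
    obtain ⟨c, hc, hbc⟩ := (hmul α β b).1 hb
    refine ⟨add (mul α c) α, plOrd_add hadd α (mul α c) (IH c hc α hα (lemB hβ hc)) hα,
      hbc, ?_⟩
    intro y hy
    exact (hmul α β y).2 ⟨c, hc, hy⟩

theorem addK {add : ZFSet → ZFSet → ZFSet} (hadd : IsPlAdd add) {ξ c c' : ZFSet}
    (hp : (add ξ c').PlOrd) (hc' : c' ∈ c) : add ξ c' ∈ add ξ c :=
  (hadd ξ c _).2 (Or.inr ⟨c', hc', mem_plumpSucc.2 ⟨subset_rfl, hp⟩⟩)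

theorem lemN {add mul : ZFSet → ZFSet → ZFSet} (hadd : IsPlAdd add)
    (hmul : IsPlMul add mul) (α : ZFSet) :
    ∀ η, η.PlOrd → ∀ x ∈ mul α η, ∃ ε ∈ α, ∃ δ' ∈ η, x ⊆ add (mul α δ') ε := by
  intro η
  induction η using ZFSet.inductionOn with
  | _ η IH =>
    intro hη x hx
    obtain ⟨δ', hδ', hx'⟩ := (hmul α η x).1 hx
    rcases (hadd (mul α δ') α x).1 hx' with h1 | ⟨ε, hε, hps⟩
    · obtain ⟨ε, hε, δ'', hδ'', hsub⟩ := IH δ' hδ' (lemB hη hδ') x h1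
      exact ⟨ε, hε, δ'', hη.1.1.mem_trans hδ'' hδ', hsub⟩
    · exact ⟨ε, hε, δ', hδ', (mem_plumpSucc.1 hps).1⟩

theorem lemQ {add mul : ZFSet → ZFSet → ZFSet} (hadd : IsPlAdd add) (hmul : IsPlMul add mul)
    {α d δ' : ZFSet} (hα : α.PlOrd) (hd : d.PlOrd) (hδ' : δ'.PlOrd)
    (hM : ∀ δ'' ε : ZFSet, δ''.PlOrd → ε.PlOrd → ε ∈ α →
      mul α d ⊆ add (mul α δ'') ε → d ⊆ δ'') :
    ∀ c, c.PlOrd → ∀ c' ∈ c, add (mul α d) c ⊆ add (mul α δ') c' → d ∈ δ' := by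
  intro c
  induction c using ZFSet.inductionOn with
  | _ c IH =>
    intro hc c' hc' hsub
    have hc'p : c'.PlOrd := lemB hc hc'
    have hyp : (add (mul α d) c').PlOrd :=
      plOrd_add hadd c' (mul α d) (plOrd_mul hadd hmul d α hα hd) hc'p
    have hy : add (mul α d) c' ∈ add (mul α δ') c' := hsub (addK hadd hyp hc')
    rcases (hadd (mul α δ') c' _).1 hy with h1 | ⟨c'', hc'', hps⟩
    · obtain ⟨ε, hε, d', hd', hsub'⟩ := lemN hadd hmul α δ' hδ' _ h1
      have hdd' : d ⊆ d' := hM d' ε (lemB hδ' hd') (lemB hα hε) hε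
        (fun z hz => hsub' (subset_addL hadd (mul α d) c' hz))
      exact lemD d' δ' d hδ' hd hd' hdd'
    · exact IH c' hc' hc'p c'' hc'' (mem_plumpSucc.1 hps).1

theorem lemM {add mul : ZFSet → ZFSet → ZFSet} (hadd : IsPlAdd add) (hmul : IsPlMul add mul)
    {α : ZFSet} (hα : α.PlOrd) :
    ∀ δ, δ.PlOrd → ∀ δ'' ε : ZFSet, δ''.PlOrd → ε.PlOrd → ε ∈ α →
      mul α δ ⊆ add (mul α δ'') ε → δ ⊆ δ'' := by
  intro δ
  induction δ using ZFSet.inductionOn with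
  | _ δ IH =>
    intro hδ δ'' ε hδ'' hε hεα hsub d hd
    have hdp : d.PlOrd := lemB hδ hd
    have h1 : add (mul α d) α ⊆ add (mul α δ'') ε := by
      intro z hz
      exact hsub ((hmul α δ z).2 ⟨d, hd, hz⟩)
    exact lemQ hadd hmul hα hdp hδ'' (IH d hd hdp) α hα ε hεα h1

end Aux

theorem plMul_subset_cancel (add mul : ZFSet → ZFSet → ZFSet)
    (hadd : IsPlAdd add) (hmul : IsPlMul add mul)
    (α β β' γ : ZFSet) (hα : α.PlOrd) (hβ : β.PlOrd) (hβ' : β'.PlOrd) (hγ : γ.PlOrd)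
    (hγα : γ ∈ α) (h : mul α β ⊆ add (mul α β') γ) : β ⊆ β' := by
  intro δ hδ
  have hδp : δ.PlOrd := lemB hβ hδ
  have h1 : add (mul α δ) α ⊆ add (mul α β') γ := fun z hz =>
    h ((hmul α β z).2 ⟨δ, hδ, hz⟩)
  exact lemQ hadd hmul hα hδp hβ' (lemM hadd hmul hα δ hδp) α hα γ hγα h1
end

section
/- For plump ordinals α, β, the map f : α × β → α·β given by (γ, δ) ↦ α·δ + γ is a well-defined injection into α·β. -/
/- ### Auxiliary lemmas -/

private lemma isOrd_mem {x y : ZFSet} (hx : x.IsOrd) (hy : y ∈ x) : y.IsOrd :=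
  ⟨hx.2 y hy, fun z hz => hx.2 z (hx.1 y hy hz)⟩

/-- Trichotomy for ordinals. -/
private lemma ord_tri : ∀ x : ZFSet, x.IsOrd → ∀ y : ZFSet, y.IsOrd →
    x ∈ y ∨ x = y ∨ y ∈ x := by
  intro x
  induction x using ZFSet.inductionOn with
  | _ x ihx =>
  intro hx y
  induction y using ZFSet.inductionOn with
  | _ y ihy =>
  intro hy
  by_cases h1 : x ∈ y
  · exact Or.inl h1
  by_cases h2 : y ∈ x
  · exact Or.inr (Or.inr h2)
  refine Or.inr (Or.inl (ZFSet.ext fun z => ⟨fun hz => ?_, fun hz => ?_⟩))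
  · rcases ihx z hz (isOrd_mem hx hz) y hy with h | h | h
    · exact h
    · exact absurd (h ▸ hz) h2
    · exact absurd (hx.1 z hz h) h2
  · rcases ihy z hz (isOrd_mem hy hz) with h | h | h
    · exact absurd (hy.1 z hz h) h1
    · exact absurd (h ▸ hz) h1
    · exact h

private lemma ord_subset {x y : ZFSet} (hx : x.IsOrd) (hy : y.IsOrd) (h : x ⊆ y) :
    x = y ∨ x ∈ y := by
  rcases ord_tri x hx y hy with h1 | h1 | h1
  · exact Or.inr h1
  · exact Or.inl h1
  · exact absurd (h h1) (ZFSet.mem_irrefl y)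

/-- Classically, every ordinal is plump. -/
private lemma plOrd_of_isOrd {α : ZFSet} (hα : α.IsOrd) : α.PlOrd := by
  refine ⟨hα, fun β hβ γ hγβ hpl => ?_⟩
  have hβα : β ⊆ α := hα.1 β hβ
  have hβo : β.IsOrd := isOrd_mem hα hβ
  have hγt : γ.IsTransitive := by
    intro δ hδ ε hε
    have hδα : δ ∈ α := hβα (hγβ hδ)
    exact hpl δ hδ ε (hα.1 δ hδα hε) (hα.2 δ hδα ε hε)
  have hγo : γ.IsOrd := ⟨hγt, fun z hz => hα.2 z (hβα (hγβ hz))⟩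
  rcases ord_subset hγo hβo hγβ with h | h
  · subst h
    exact ⟨hβ, fun δ _ hβδ => hβδ⟩
  · exact ⟨hβα h, fun δ hδ hβδ => hα.2 δ hδ β hβδ h⟩

private lemma self_mem_plumpSucc {α : ZFSet} (hα : α.IsOrd) : α ∈ α.plumpSucc :=
  ZFSet.mem_sep.2 ⟨ZFSet.mem_powerset.2 (fun _ h => h), plOrd_of_isOrd hα⟩

section
variable {add mul : ZFSet → ZFSet → ZFSet}

private lemma subset_add (hadd : IsPlAdd add) (μ γ : ZFSet) : μ ⊆ add μ γ :=
  fun x hx => (hadd μ γ x).2 (Or.inl hx)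

private lemma add_mono (hadd : IsPlAdd add) {β β' : ZFSet} (h : ∀ γ ∈ β, γ ∈ β')
    (μ : ZFSet) : add μ β ⊆ add μ β' := by
  intro x hx
  rcases (hadd μ β x).1 hx with h1 | ⟨γ, hγ, h1⟩
  · exact (hadd μ β' x).2 (Or.inl h1)
  · exact (hadd μ β' x).2 (Or.inr ⟨γ, h γ hγ, h1⟩)

private lemma isOrd_add (hadd : IsPlAdd add) {μ β : ZFSet} (hμ : μ.IsOrd)
    (hβ : β.IsTransitive) : (add μ β).IsOrd := by
  constructor
  · intro x hx y hy
    rcases (hadd μ β x).1 hx with h | ⟨γ, hγ, h⟩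
    · exact (hadd μ β y).2 (Or.inl (hμ.1 x h hy))
    · have hsub : x ⊆ add μ γ := ZFSet.mem_powerset.1 (ZFSet.mem_sep.1 h).1
      exact add_mono hadd (fun c hc => hβ γ hγ hc) μ (hsub hy)
  · intro x hx
    rcases (hadd μ β x).1 hx with h | ⟨γ, _, h⟩
    · exact hμ.2 x h
    · exact (ZFSet.mem_sep.1 h).2.1.1

private lemma add_lt (hadd : IsPlAdd add) {μ γ β : ZFSet} (hμ : μ.IsOrd)
    (hγ : γ.IsOrd) (hγβ : γ ∈ β) : add μ γ ∈ add μ β :=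
  (hadd μ β (add μ γ)).2 (Or.inr ⟨γ, hγβ, self_mem_plumpSucc (isOrd_add hadd hμ hγ.1)⟩)

private lemma add_cancel (hadd : IsPlAdd add) {μ γ γ' : ZFSet} (hμ : μ.IsOrd)
    (hγ : γ.IsOrd) (hγ' : γ'.IsOrd) (h : add μ γ = add μ γ') : γ = γ' := by
  rcases ord_tri γ hγ γ' hγ' with hc | hc | hc
  · exact absurd (h ▸ add_lt hadd hμ hγ hc) (ZFSet.mem_irrefl _)
  · exact hc
  · exact absurd (h ▸ add_lt hadd hμ hγ' hc) (ZFSet.mem_irrefl _)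

private lemma isOrd_mul (hadd : IsPlAdd add) (hmul : IsPlMul add mul) {α : ZFSet}
    (hα : α.IsOrd) : ∀ β : ZFSet, β.IsOrd → (mul α β).IsOrd := by
  intro β
  induction β using ZFSet.inductionOn with
  | _ β ih =>
  intro hβ
  constructor
  · intro x hx y hy
    obtain ⟨δ, hδ, hxm⟩ := (hmul α β x).1 hx
    have ho : (add (mul α δ) α).IsOrd :=
      isOrd_add hadd (ih δ hδ (isOrd_mem hβ hδ)) hα.1
    exact (hmul α β y).2 ⟨δ, hδ, ho.1 x hxm hy⟩
  · intro x hx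
    obtain ⟨δ, hδ, hxm⟩ := (hmul α β x).1 hx
    exact ((isOrd_add hadd (ih δ hδ (isOrd_mem hβ hδ)) hα.1).2) x hxm

end

/-- For plump ordinals `α, β`, the map `(γ, δ) ↦ α·δ + γ` is a well-defined injection
`α × β → α·β`. -/
theorem plOrd_code_pairs (add mul : ZFSet → ZFSet → ZFSet)
    (hadd : IsPlAdd add) (hmul : IsPlMul add mul)
    (α β : ZFSet) (hα : α.PlOrd) (hβ : β.PlOrd) :
    (∀ γ ∈ α, ∀ δ ∈ β, add (mul α δ) γ ∈ mul α β) ∧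
      ∀ γ ∈ α, ∀ δ ∈ β, ∀ γ' ∈ α, ∀ δ' ∈ β,
        add (mul α δ) γ = add (mul α δ') γ' → γ = γ' ∧ δ = δ' := by
  obtain ⟨hαo, -⟩ := hα
  obtain ⟨hβo, -⟩ := hβ
  constructor
  · intro γ hγ δ hδ
    have hμ : (mul α δ).IsOrd := isOrd_mul hadd hmul hαo δ (isOrd_mem hβo hδ)
    exact (hmul α β _).2 ⟨δ, hδ, add_lt hadd hμ (isOrd_mem hαo hγ) hγ⟩
  · intro γ hγ δ hδ γ' hγ' δ' hδ' h
    have hδo := isOrd_mem hβo hδ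
    have hδ'o := isOrd_mem hβo hδ'
    -- if δ ∈ δ', contradiction
    have key : ∀ δ₁ ∈ β, ∀ δ₂ ∈ β, ∀ γ₁ ∈ α, ∀ γ₂ ∈ α,
        add (mul α δ₁) γ₁ = add (mul α δ₂) γ₂ → δ₁ ∉ δ₂ := by
      intro δ₁ hδ₁ δ₂ _ γ₁ hγ₁ γ₂ _ heq hlt
      have hμ₁ : (mul α δ₁).IsOrd := isOrd_mul hadd hmul hαo δ₁ (isOrd_mem hβo hδ₁)
      have h1 : add (mul α δ₁) γ₁ ∈ add (mul α δ₁) α :=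
        add_lt hadd hμ₁ (isOrd_mem hαo hγ₁) hγ₁
      have h2 : add (mul α δ₁) γ₁ ∈ mul α δ₂ := (hmul α δ₂ _).2 ⟨δ₁, hlt, h1⟩
      have h3 : add (mul α δ₁) γ₁ ∈ add (mul α δ₂) γ₂ := subset_add hadd _ _ h2
      exact ZFSet.mem_irrefl _ (heq ▸ h3)
    have hδδ : δ = δ' := by
      rcases ord_tri δ hδo δ' hδ'o with hc | hc | hc
      · exact absurd hc (key δ hδ δ' hδ' γ hγ γ' hγ' h)
      · exact hc
      · exact absurd hc (key δ' hδ' δ hδ γ' hγ' γ hγ h.symm)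
    subst hδδ
    have hμ : (mul α δ).IsOrd := isOrd_mul hadd hmul hαo δ hδo
    exact ⟨add_cancel hadd hμ (isOrd_mem hαo hγ) (isOrd_mem hαo hγ') h, rfl⟩
end
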